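/- Let G be a finite connected split graph and let D_s and D_t be two distance-2 dominating sets of G with |D_s| = |D_t|. Then there exists a TS-sequence in G from D_s to D_t. -/

import Mathlib

/-
In a connected split graph with at least two vertices every vertex outside the clique `K` has a
neighbour in `K`, so every vertex is within distance 2 of each vertex of `K`, and any set meeting
`K` is a distance-2 dominating set. A dominating set can slide one of its tokens onto `K`; after
that, tokens are exchanged one at a time, `D ↦ D - x + y`, keeping a vertex of `K` occupied.
An exchange is routed through `K`: via a vacant vertex of `K` if there is one; if `K` is fully
occupied, `y` first takes the token of a neighbour `k ∈ K` (the set still contains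
`K \ {k} ∪ {y}`, which dominates) and the token on `x` then slides to `k`.
-/

/-- `D` is a distance-`r` dominating set of `G`. -/
def IsDrDS {V : Type*} (G : SimpleGraph V) (r : ℕ) (D : Set V) : Prop :=
  ∀ v : V, ∃ u ∈ D, G.Reachable u v ∧ G.dist u v ≤ r

/-- A TS-sequence of length `q` of distance-`r` dominating sets of `G`:
each step slides a token along an edge. -/
def IsTSSeq {V : Type*} (G : SimpleGraph V) (r q : ℕ)
    (Dseq : Fin (q + 1) → Finset V) : Prop :=
  (∀ i, IsDrDS G r ↑(Dseq i)) ∧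
  ∀ i : Fin q, ∃ x ∈ Dseq i.castSucc, ∃ y, y ∉ Dseq i.castSucc ∧ G.Adj x y ∧
    (↑(Dseq i.succ) : Set V) = (↑(Dseq i.castSucc) \ {x}) ∪ {y}

section MoveToken

variable {α : Type*} [DecidableEq α]

def moveToken (D : Finset α) (x y : α) : Finset α := insert y (D.erase x)

variable {D : Finset α} {x y z : α}

@[simp]
theorem mem_moveToken : z ∈ moveToken D x y ↔ z = y ∨ z ≠ x ∧ z ∈ D := by
  simp [moveToken]

theorem mem_moveToken_self : y ∈ moveToken D x y := Finset.mem_insert_self _ _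

theorem coe_moveToken : (↑(moveToken D x y) : Set α) = (↑D \ {x}) ∪ {y} := by
  rw [moveToken, Finset.coe_insert, Finset.coe_erase, Set.union_singleton]

theorem card_moveToken (hx : x ∈ D) (hy : y ∉ D) : (moveToken D x y).card = D.card := by
  rw [moveToken, Finset.card_insert_of_notMem fun h => hy (Finset.mem_of_mem_erase h),
    Finset.card_erase_add_one hx]

theorem moveToken_moveToken_of_notMem (hy : y ∉ D) (z : α) :
    moveToken (moveToken D x y) y z = moveToken D x z := by
  rw [moveToken, moveToken, Finset.erase_insert fun h => hy (Finset.mem_of_mem_erase h)]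
  rfl

theorem moveToken_moveToken_self (hx : x ∈ D) (hy : y ∉ D) :
    moveToken (moveToken D x y) y x = D := by
  rw [moveToken_moveToken_of_notMem hy, moveToken, Finset.insert_erase hx]

theorem moveToken_moveToken_of_mem {w : α} (hw : w ∈ D) (hxw : x ≠ w) (hxy : x ≠ y) :
    moveToken (moveToken D w y) x w = moveToken D x y := by
  ext z
  simp only [mem_moveToken]
  by_cases hzw : z = w
  · subst hzw; simp [hw, hxw.symm]
  · by_cases hzy : z = y <;> simp [hzw, hzy, hxy.symm]

theorem card_sdiff_moveToken_lt {D' : Finset α} (hx : x ∈ D \ D') (hy : y ∈ D' \ D) :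
    (moveToken D x y \ D').card < (D \ D').card := by
  have : moveToken D x y \ D' = (D \ D').erase x := by
    ext z
    simp only [Finset.mem_sdiff, mem_moveToken, Finset.mem_erase] at hy ⊢
    constructor
    · rintro ⟨rfl | h, hz⟩
      exacts [absurd hy.1 hz, ⟨h.1, h.2, hz⟩]
    · exact fun h => ⟨.inr ⟨h.1, h.2.1⟩, h.2.2⟩
  rw [this]
  exact Finset.card_erase_lt_of_mem hx

end MoveToken

theorem Finset.eq_of_card_eq_of_subsingleton {α : Type*} [Subsingleton α] {s t : Finset α}
    (h : s.card = t.card) : s = t := by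
  refine Finset.eq_of_subset_of_card_le (fun a ha => ?_) h.ge
  obtain ⟨b, hb⟩ := Finset.card_pos.1 (h ▸ Finset.card_pos.2 ⟨a, ha⟩)
  rwa [Subsingleton.elim a b]

section TokenSliding

variable {V : Type*} [DecidableEq V] {G : SimpleGraph V} {r : ℕ}

variable (G r) in
def TSStep (A B : Finset V) : Prop :=
  IsDrDS G r ↑A ∧ IsDrDS G r ↑B ∧ ∃ x ∈ A, ∃ y ∉ A, G.Adj x y ∧ B = moveToken A x y

variable (G r) in
abbrev TSReach : Finset V → Finset V → Prop := Relation.ReflTransGen (TSStep G r)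

theorem TSStep.symm {A B : Finset V} (h : TSStep G r A B) : TSStep G r B A := by
  obtain ⟨hA, hB, x, hx, y, hy, hxy, rfl⟩ := h
  refine ⟨hB, hA, y, mem_moveToken_self, x, ?_, hxy.symm, (moveToken_moveToken_self hx hy).symm⟩
  simp [hxy.ne]

instance : Std.Symm (TSStep G r) := ⟨fun _ _ => TSStep.symm⟩

theorem TSReach.symm {A B : Finset V} (h : TSReach G r A B) : TSReach G r B A :=
  Std.Symm.symm _ _ h

theorem TSReach.card_eq {A B : Finset V} (h : TSReach G r A B) : B.card = A.card := by
  induction h with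
  | refl => rfl
  | tail _ hBC ih =>
    obtain ⟨-, -, x, hx, y, hy, -, rfl⟩ := hBC
    rw [card_moveToken hx hy, ih]

theorem TSReach.exists_isTSSeq {A B : Finset V} (h : TSReach G r A B) (hA : IsDrDS G r ↑A) :
    ∃ (q : ℕ) (f : Fin (q + 1) → Finset V),
      IsTSSeq G r q f ∧ f 0 = A ∧ f (Fin.last q) = B := by
  induction h with
  | refl => exact ⟨0, fun _ => A, ⟨fun _ => hA, fun i => i.elim0⟩, rfl, rfl⟩
  | tail _ hBC ih =>
    obtain ⟨q, f, ⟨hdom, hstep⟩, h0, rfl⟩ := ih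
    obtain ⟨-, hC, x, hx, y, hy, hxy, rfl⟩ := hBC
    refine ⟨q + 1, Fin.snoc f _, ⟨fun i => ?_, fun i => ?_⟩, by simpa using h0, Fin.snoc_last _ _⟩
    · induction i using Fin.lastCases with
      | last => simpa using hC
      | cast i => simpa using hdom i
    · induction i using Fin.lastCases with
      | last => exact ⟨x, by simpa using hx, y, by simpa using hy, hxy, by simpa using coe_moveToken⟩
      | cast i =>
        rw [Fin.succ_castSucc, Fin.snoc_castSucc, Fin.snoc_castSucc]
        exact hstep i

theorem tsReach_moveToken_of_adj {D : Finset V} {x y : V} (hx : x ∈ D) (hy : y ∉ D)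
    (hxy : G.Adj x y) (hD : IsDrDS G r ↑D) (hD' : IsDrDS G r ↑(moveToken D x y)) :
    TSReach G r D (moveToken D x y) :=
  .single ⟨hD, hD', x, hx, y, hy, hxy, rfl⟩

/-- `hmid` concerns the set after the first of two slides: if `w` is vacant the token on `x` passes
through it, otherwise the token on `w` moves on to `y` and the token on `x` takes its place. -/
theorem tsReach_moveToken_of_adj_adj {D : Finset V} {x w y : V} (hx : x ∈ D) (hy : y ∉ D)
    (hxw : G.Adj x w) (hwy : G.Adj w y) (hD : IsDrDS G r ↑D)
    (hD' : IsDrDS G r ↑(moveToken D x y))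
    (hmid : IsDrDS G r ↑(if w ∈ D then moveToken D w y else moveToken D x w)) :
    TSReach G r D (moveToken D x y) := by
  have hxy := ne_of_mem_of_not_mem hx hy
  split_ifs at hmid with hw
  · have hx' : x ∈ moveToken D w y := by simp [hx, hxw.ne]
    have hw' : w ∉ moveToken D w y := by simp [hwy.ne]
    rw [← moveToken_moveToken_of_mem hw hxw.ne hxy] at hD' ⊢
    exact (tsReach_moveToken_of_adj hw hy hwy hD hmid).tail
      ⟨hmid, hD', x, hx', w, hw', hxw, rfl⟩
  · have hy' : y ∉ moveToken D x w := by simp [hwy.ne.symm, hy]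
    rw [← moveToken_moveToken_of_notMem hw] at hD' ⊢
    exact (tsReach_moveToken_of_adj hx hw hxw hD hmid).tail
      ⟨hmid, hD', w, mem_moveToken_self, y, hy', hwy, rfl⟩

end TokenSliding

section SplitGraph

variable {V : Type*} {G : SimpleGraph V} {K : Set V}

theorem IsDrDS.mono {r : ℕ} {D E : Set V} (hD : IsDrDS G r D) (h : D ⊆ E) : IsDrDS G r E :=
  fun v =>
    let ⟨u, hu, huv⟩ := hD v
    ⟨u, h hu, huv⟩

theorem reachable_and_dist_le_two {u w v : V} (huw : u = w ∨ G.Adj u w)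
    (hwv : w = v ∨ G.Adj w v) : G.Reachable u v ∧ G.dist u v ≤ 2 := by
  obtain ⟨p, hp⟩ : ∃ p : G.Walk u v, p.length ≤ 2 := by
    rcases huw with rfl | huw <;> rcases hwv with rfl | hwv
    exacts [⟨.nil, by simp⟩, ⟨hwv.toWalk, by simp⟩, ⟨huw.toWalk, by simp⟩,
      ⟨.cons huw hwv.toWalk, by simp⟩]
  exact ⟨p.reachable, (SimpleGraph.dist_le p).trans hp⟩

theorem exists_adj_mem_of_split [Nontrivial V] {S : Set V} (hpart : K ∪ S = Set.univ)
    (hS : ∀ a ∈ S, ∀ b ∈ S, ¬ G.Adj a b) (hconn : G.Connected) :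
    ∀ v ∉ K, ∃ k ∈ K, G.Adj v k := by
  have hmemS : ∀ u ∉ K, u ∈ S := fun u hu => (Set.eq_univ_iff_forall.1 hpart u).resolve_left hu
  intro v hv
  obtain ⟨w, hvw⟩ := hconn.preconnected.exists_adj_of_nontrivial v
  by_contra! h
  exact hS v (hmemS v hv) w (hmemS w fun hw => h w hw hvw) hvw

theorem exists_mem_eq_or_adj (hKdom : ∀ v ∉ K, ∃ k ∈ K, G.Adj v k) (v : V) :
    ∃ w ∈ K, w = v ∨ G.Adj w v := by
  by_cases hv : v ∈ K
  · exact ⟨v, hv, .inl rfl⟩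
  · obtain ⟨w, hw, hvw⟩ := hKdom v hv
    exact ⟨w, hw, .inr hvw.symm⟩

theorem isDrDS_two_of_mem (hK : G.IsClique K) (hKdom : ∀ v ∉ K, ∃ k ∈ K, G.Adj v k)
    {E : Set V} {k : V} (hk : k ∈ K) (hkE : k ∈ E) : IsDrDS G 2 E := fun v => by
  obtain ⟨w, hw, hwv⟩ := exists_mem_eq_or_adj hKdom v
  exact ⟨k, hkE, reachable_and_dist_le_two (or_iff_not_imp_left.2 (hK hk hw)) hwv⟩

theorem isDrDS_two_insert_diff_singleton (hKdom : ∀ v ∉ K, ∃ k ∈ K, G.Adj v k) {k y : V}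
    (hyk : G.Adj y k) : IsDrDS G 2 (insert y (K \ {k})) := fun v => by
  obtain ⟨w, hw, hwv⟩ := exists_mem_eq_or_adj hKdom v
  obtain rfl | hwk := eq_or_ne w k
  · exact ⟨y, Set.mem_insert _ _, reachable_and_dist_le_two (.inr hyk) hwv⟩
  · exact ⟨w, Set.mem_insert_of_mem _ ⟨hw, hwk⟩, reachable_and_dist_le_two (.inl rfl) hwv⟩

variable [DecidableEq V]

theorem tsReach_moveToken_of_mem_clique (hK : G.IsClique K)
    (hKdom : ∀ v ∉ K, ∃ k ∈ K, G.Adj v k) {D : Finset V} {x y : V} (hx : x ∈ D) (hy : y ∉ D)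
    (hyK : y ∈ K) (hD : IsDrDS G 2 ↑D) : TSReach G 2 D (moveToken D x y) := by
  have hD' : IsDrDS G 2 ↑(moveToken D x y) := isDrDS_two_of_mem hK hKdom hyK mem_moveToken_self
  have hxy := ne_of_mem_of_not_mem hx hy
  by_cases hxK : x ∈ K
  · exact tsReach_moveToken_of_adj hx hy (hK hxK hyK hxy) hD hD'
  obtain ⟨w, hwK, hxw⟩ := hKdom x hxK
  obtain rfl | hwy := eq_or_ne w y
  · exact tsReach_moveToken_of_adj hx hy hxw hD hD'
  refine tsReach_moveToken_of_adj_adj hx hy hxw (hK hwK hyK hwy) hD hD' ?_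
  split_ifs
  exacts [isDrDS_two_of_mem hK hKdom hyK mem_moveToken_self,
    isDrDS_two_of_mem hK hKdom hwK mem_moveToken_self]

theorem tsReach_moveToken_of_isDrDS (hK : G.IsClique K) (hKdom : ∀ v ∉ K, ∃ k ∈ K, G.Adj v k)
    {D : Finset V} {x y : V} (hx : x ∈ D) (hy : y ∉ D) (hD : IsDrDS G 2 ↑D)
    (hD' : IsDrDS G 2 ↑(moveToken D x y)) : TSReach G 2 D (moveToken D x y) := by
  by_cases hyK : y ∈ K
  · exact tsReach_moveToken_of_mem_clique hK hKdom hx hy hyK hD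
  by_cases hKD : ∃ w ∈ K, w ∉ D
  · obtain ⟨w, hwK, hwD⟩ := hKD
    have hw : w ∉ moveToken D x y := by simp [hwD, ne_of_mem_of_not_mem hwK hyK]
    have hback := tsReach_moveToken_of_mem_clique hK hKdom mem_moveToken_self hw hwK hD'
    rw [moveToken_moveToken_of_notMem hy] at hback
    exact (tsReach_moveToken_of_mem_clique hK hKdom hx hwD hwK hD).trans hback.symm
  push Not at hKD
  obtain ⟨k, hkK, hyk⟩ := hKdom y hyK
  have hE : IsDrDS G 2 ↑(moveToken D k y) := by
    refine (isDrDS_two_insert_diff_singleton hKdom hyk).mono ?_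
    rintro z (rfl | ⟨hzK, hzk⟩)
    exacts [mem_moveToken_self, mem_moveToken.2 (.inr ⟨hzk, hKD z hzK⟩)]
  have hstep := tsReach_moveToken_of_adj (hKD k hkK) hy hyk.symm hD hE
  obtain rfl | hxk := eq_or_ne x k
  · exact hstep
  have hback := tsReach_moveToken_of_mem_clique hK hKdom (x := x) (by simp [hx, hxk])
    (by simp [hyk.ne.symm]) hkK hE
  rw [moveToken_moveToken_of_mem (hKD k hkK) hxk (ne_of_mem_of_not_mem hx hy)] at hback
  exact hstep.trans hback

theorem exists_tsReach_mem_clique [Nonempty V] (hK : G.IsClique K)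
    (hKdom : ∀ v ∉ K, ∃ k ∈ K, G.Adj v k) {D : Finset V} (hD : IsDrDS G 2 ↑D) :
    ∃ E, TSReach G 2 D E ∧ ∃ k ∈ K, k ∈ E := by
  by_cases h : ∃ k ∈ K, k ∈ D
  · exact ⟨D, .refl, h⟩
  push Not at h
  obtain ⟨u, hu, -⟩ := hD (Classical.arbitrary V)
  obtain ⟨k, hkK, -⟩ := hKdom u fun huK => h u huK hu
  exact ⟨_, tsReach_moveToken_of_mem_clique hK hKdom hu (h k hkK) hkK hD, k, hkK,
    mem_moveToken_self⟩

theorem tsReach_of_mem_clique (hK : G.IsClique K) (hKdom : ∀ v ∉ K, ∃ k ∈ K, G.Adj v k)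
    {D D' : Finset V} (hD : ∃ k ∈ K, k ∈ D) (hD' : ∃ k ∈ K, k ∈ D')
    (hcard : D.card = D'.card) : TSReach G 2 D D' := by
  induction hn : (D \ D').card using Nat.strong_induction_on generalizing D with
  | _ n ih =>
  obtain rfl | hne := eq_or_ne D D'
  · exact .refl
  obtain ⟨x, hx⟩ : (D \ D').Nonempty := Finset.sdiff_nonempty.2 fun h =>
    hne (Finset.eq_of_subset_of_card_le h hcard.ge)
  obtain ⟨hxD, hxD'⟩ := Finset.mem_sdiff.1 hx
  -- keep an occupied vertex `k` of `K ∩ D'` occupied, or move the token to it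
  obtain ⟨k, hkK, hkD'⟩ := hD'
  obtain ⟨y, hy, hk⟩ : ∃ y ∈ D' \ D, k ∈ moveToken D x y := by
    by_cases hkD : k ∈ D
    · obtain ⟨y, hy⟩ : (D' \ D).Nonempty := Finset.sdiff_nonempty.2 fun h =>
        hne (Finset.eq_of_subset_of_card_le h hcard.le).symm
      exact ⟨y, hy, by simp [hkD, ne_of_mem_of_not_mem hkD' hxD']⟩
    · exact ⟨k, Finset.mem_sdiff.2 ⟨hkD', hkD⟩, mem_moveToken_self⟩
  have hyD := (Finset.mem_sdiff.1 hy).2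
  obtain ⟨k₀, hk₀K, hk₀D⟩ := hD
  refine (tsReach_moveToken_of_isDrDS hK hKdom hxD hyD (isDrDS_two_of_mem hK hKdom hk₀K hk₀D)
    (isDrDS_two_of_mem hK hKdom hkK hk)).trans ?_
  exact ih _ (hn ▸ card_sdiff_moveToken_lt hx hy) ⟨k, hkK, hk⟩
    (by rw [card_moveToken hxD hyD, hcard]) rfl

end SplitGraph

theorem stmt4_general {V : Type*} (G : SimpleGraph V) (K S : Set V)
    (hpart : K ∪ S = Set.univ)
    (hK : G.IsClique K) (hS : ∀ a ∈ S, ∀ b ∈ S, ¬ G.Adj a b)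
    (hconn : G.Connected)
    (Ds Dt : Finset V) (hDs : IsDrDS G 2 ↑Ds) (hDt : IsDrDS G 2 ↑Dt)
    (hcard : Ds.card = Dt.card) :
    ∃ (q : ℕ) (Dseq : Fin (q + 1) → Finset V),
      IsTSSeq G 2 q Dseq ∧ Dseq 0 = Ds ∧ Dseq (Fin.last q) = Dt := by
  classical
  suffices TSReach G 2 Ds Dt from this.exists_isTSSeq hDs
  rcases subsingleton_or_nontrivial V with hV | hV
  · exact Finset.eq_of_card_eq_of_subsingleton hcard ▸ .refl
  have hKdom := exists_adj_mem_of_split hpart hS hconn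
  obtain ⟨Ds', hs, hKs⟩ := exists_tsReach_mem_clique hK hKdom hDs
  obtain ⟨Dt', ht, hKt⟩ := exists_tsReach_mem_clique hK hKdom hDt
  have hcard' : Ds'.card = Dt'.card := by rw [hs.card_eq, ht.card_eq, hcard]
  exact hs.trans ((tsReach_of_mem_clique hK hKdom hKs hKt hcard').trans ht.symm)

theorem stmt4 {V : Type*} [Fintype V] (G : SimpleGraph V) (K S : Set V)
    (hpart : K ∪ S = Set.univ) (hdisj : Disjoint K S)
    (hK : G.IsClique K) (hS : ∀ a ∈ S, ∀ b ∈ S, ¬ G.Adj a b)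
    (hconn : G.Connected)
    (Ds Dt : Finset V) (hDs : IsDrDS G 2 ↑Ds) (hDt : IsDrDS G 2 ↑Dt)
    (hcard : Ds.card = Dt.card) :
    ∃ (q : ℕ) (Dseq : Fin (q + 1) → Finset V),
      IsTSSeq G 2 q Dseq ∧ Dseq 0 = Ds ∧ Dseq (Fin.last q) = Dt :=
  stmt4_general G K S hpart hK hS hconn Ds Dt hDs hDt hcard
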